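/- The difference equation A(x) P_n(x+1) + B(x) P_n(x-1) + C(x) P_n(x) = n[(N-x) P_n(x+1) + (x-N-α-1) P_n(x)] holds as an identity of polynomials in x, where A(x) = (N-x)(x-β+1), B(x) = x(α+β+N+1-x), C(x) = -(A(x)+B(x)). -/

import Mathlib

noncomputable def poch (a : ℝ) (n : ℕ) : ℝ := ∏ i ∈ Finset.range n, (a + i)

/-- The R_I polynomial of Hahn type P_n(x; α, β, N). -/
noncomputable def P (α β : ℝ) (N n : ℕ) (x : ℝ) : ℝ :=
  ∑ k ∈ Finset.range (n + 1),
    poch (-(n : ℝ)) k * poch (α + 1) k /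
      ((Nat.factorial k : ℝ) * poch (-(N : ℝ)) k * poch (1 - β - n) k) * poch (-x) k

/-!
Write `L` for the difference operator of the statement minus its right-hand side, so the claim is
`L P_n = 0`. On the falling-factorial basis `φ_k(x) = (-x)_k` the operator is lower bidiagonal:
`L φ_k = λ_k φ_k - μ_k φ_{k-1}` with `λ_k = (n-k)(α+1+k)` and `μ_k = k(N-k+1)(k-β-n)`.
The hypergeometric coefficients `c_k` of `P_n` satisfy `c_{k+1} μ_{k+1} = c_k λ_k`, so
`L P_n = ∑ c_k (λ_k φ_k - μ_k φ_{k-1})` telescopes to `c_n λ_n φ_n`, which vanishes since `λ_n = 0`.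
-/

open Finset

lemma poch_zero (a : ℝ) : poch a 0 = 1 := by simp [poch]

lemma poch_succ (a : ℝ) (k : ℕ) : poch a (k + 1) = poch a k * (a + k) := by
  simp [poch, prod_range_succ]

lemma poch_succ_eq_mul_poch_add_one (a : ℝ) (k : ℕ) : poch a (k + 1) = a * poch (a + 1) k := by
  simp only [poch, prod_range_succ', Nat.cast_zero, add_zero, Nat.cast_succ, add_assoc,
    add_comm (1 : ℝ), mul_comm]

lemma mul_poch_add_one_succ (a : ℝ) (k : ℕ) :
    a * poch (a + 1) (k + 1) = (a + k) * (a + k + 1) * poch a k := by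
  rw [← poch_succ_eq_mul_poch_add_one, poch_succ, poch_succ]
  push_cast
  ring

noncomputable def hahnOperator (α β : ℝ) (N n : ℕ) (f : ℝ → ℝ) (x : ℝ) : ℝ :=
  ((N : ℝ) - x) * (x - β + 1) * f (x + 1) + x * (α + β + N + 1 - x) * f (x - 1)
    + (-(((N : ℝ) - x) * (x - β + 1) + x * (α + β + N + 1 - x))) * f x
    - (n : ℝ) * (((N : ℝ) - x) * f (x + 1) + (x - N - α - 1) * f x)

lemma hahnOperator_sum (α β : ℝ) (N n : ℕ) {ι : Type*} (s : Finset ι) (a : ι → ℝ)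
    (f : ι → ℝ → ℝ) (x : ℝ) :
    hahnOperator α β N n (fun y ↦ ∑ k ∈ s, a k * f k y) x
      = ∑ k ∈ s, a k * hahnOperator α β N n (f k) x := by
  simp only [hahnOperator, mul_sum, ← sum_add_distrib, ← sum_sub_distrib]
  refine sum_congr rfl fun k _ ↦ ?_
  ring

lemma hahnOperator_poch_zero (α β : ℝ) (N n : ℕ) (x : ℝ) :
    hahnOperator α β N n (fun y ↦ poch (-y) 0) x = n * (α + 1) := by
  simp only [hahnOperator, poch_zero]
  ring

lemma hahnOperator_poch_succ (α β : ℝ) (N n : ℕ) (j : ℕ) (x : ℝ) :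
    hahnOperator α β N n (fun y ↦ poch (-y) (j + 1)) x
      = (n - (j + 1)) * (α + 1 + (j + 1)) * poch (-x) (j + 1)
        - (j + 1) * (N - j) * (j + 1 - β - n) * poch (-x) j := by
  have shift_up : poch (-(x + 1)) (j + 1) = (-x - 1) * poch (-x) j := by
    rw [poch_succ_eq_mul_poch_add_one]
    ring_nf
  have shift_down : x * poch (-(x - 1)) (j + 1) = (x - j) * (1 - x + j) * poch (-x) j := by
    have h := mul_poch_add_one_succ (-x) j
    rw [show -x + 1 = -(x - 1) by ring] at h
    linear_combination -h
  have grow := poch_succ (-x) j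
  simp only [hahnOperator]
  linear_combination ((N - x) * (x - β + 1 - n)) * shift_up + (α + β + N + 1 - x) * shift_down
    + (-((N - x) * (x - β + 1) + x * (α + β + N + 1 - x)) - n * (x - N - α - 1)
        - (n - (j + 1)) * (α + 1 + (j + 1))) * grow

noncomputable def hahnCoeff (α β : ℝ) (N n k : ℕ) : ℝ :=
  poch (-(n : ℝ)) k * poch (α + 1) k /
    ((Nat.factorial k : ℝ) * poch (-(N : ℝ)) k * poch (1 - β - n) k)

lemma hahnCoeff_succ_mul (α β : ℝ) (N n k : ℕ)
    (hN : poch (-(N : ℝ)) (k + 1) ≠ 0) (hβ : poch (1 - β - n) (k + 1) ≠ 0) :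
    hahnCoeff α β N n (k + 1) * ((k + 1) * (N - k) * (k + 1 - β - n))
      = hahnCoeff α β N n k * ((n - k) * (α + 1 + k)) := by
  rw [poch_succ] at hN hβ
  obtain ⟨hN₀, hN₁⟩ := mul_ne_zero_iff.1 hN
  obtain ⟨hβ₀, hβ₁⟩ := mul_ne_zero_iff.1 hβ
  have hfac : (Nat.factorial k : ℝ) ≠ 0 := Nat.cast_ne_zero.2 k.factorial_ne_zero
  unfold hahnCoeff
  rw [poch_succ (-(n : ℝ)), poch_succ (α + 1), poch_succ (-(N : ℝ)), poch_succ (1 - β - n),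
    Nat.factorial_succ]
  push_cast
  field_simp
  ring

lemma hahnOperator_P (α β : ℝ) (N n : ℕ)
    (hβ : ∀ k ≤ n, poch (1 - β - n) k ≠ 0) (hN : ∀ k ≤ n, poch (-(N : ℝ)) k ≠ 0) (x : ℝ) :
    hahnOperator α β N n (P α β N n) x = 0 := by
  set g : ℕ → ℝ := fun k ↦ hahnCoeff α β N n k * ((n - k) * (α + 1 + k)) * poch (-x) k
  have step : ∀ j ∈ range n,
      hahnCoeff α β N n (j + 1) * hahnOperator α β N n (fun y ↦ poch (-y) (j + 1)) x
        = g (j + 1) - g j := by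
    intro j hj
    have hj : j + 1 ≤ n := mem_range.1 hj
    have hc := hahnCoeff_succ_mul α β N n j (hN _ hj) (hβ _ hj)
    rw [hahnOperator_poch_succ]
    simp only [g]
    push_cast
    linear_combination -poch (-x) j * hc
  change hahnOperator α β N n
    (fun y ↦ ∑ k ∈ range (n + 1), hahnCoeff α β N n k * poch (-y) k) x = 0
  rw [hahnOperator_sum, sum_range_succ', sum_congr rfl step, sum_range_sub,
    hahnOperator_poch_zero]
  simp only [g, hahnCoeff, poch_zero, sub_self, Nat.cast_zero, Nat.factorial_zero, Nat.cast_one]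
  ring

theorem stmt16_general (N n : ℕ) (α β : ℝ)
    (hβ : ∀ k ≤ n, poch (1 - β - n) k ≠ 0)
    (hN : ∀ k ≤ n, poch (-(N : ℝ)) k ≠ 0) :
    ∀ x : ℝ,
      ((N : ℝ) - x) * (x - β + 1) * P α β N n (x + 1)
        + x * (α + β + N + 1 - x) * P α β N n (x - 1)
        + (-(((N : ℝ) - x) * (x - β + 1) + x * (α + β + N + 1 - x))) * P α β N n x
      = (n : ℝ) * (((N : ℝ) - x) * P α β N n (x + 1) + (x - N - α - 1) * P α β N n x) :=
  fun x ↦ sub_eq_zero.1 (hahnOperator_P α β N n hβ hN x)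

theorem stmt16 (N n : ℕ) (α β : ℝ) (hn : n ≤ N)
    (hβ : ∀ k ≤ n, poch (1 - β - n) k ≠ 0)
    (hN : ∀ k ≤ n, poch (-(N : ℝ)) k ≠ 0) :
    ∀ x : ℝ,
      ((N : ℝ) - x) * (x - β + 1) * P α β N n (x + 1)
        + x * (α + β + N + 1 - x) * P α β N n (x - 1)
        + (-(((N : ℝ) - x) * (x - β + 1) + x * (α + β + N + 1 - x))) * P α β N n x
      = (n : ℝ) * (((N : ℝ) - x) * P α β N n (x + 1) + (x - N - α - 1) * P α β N n x) :=
  stmt16_general N n α β hβ hN
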